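/- arXiv:1311.3914 — 4 statements merged into one kernel-verified Lean document; each statement's English description precedes it below -/
import Mathlib

section
/- Let X₁ = {(t,x,y) ∈ ℝ³ : t(t-2)(t-10) = x² + y² and 0 ≤ t ≤ 2} and X₂ = {(t,x,y) ∈ ℝ³ : t(t-2)(t-10) = x² + y² and t ≥ 10}, both with the subspace topology of ℝ³. Then: (i) X(ℝ) = X₁ ∪ X₂ and X₁ ∩ X₂ = ∅; (ii) X₁ and X₂ are each connected; (iii) X₁ is compact; (iv) X₂ is unbounded. In particular, X(ℝ) has exactly two connected components, one bounded and one unbounded. -/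
/-! The real locus lies over `{t | 0 ≤ t(t-2)(t-10)} = [0,2] ∪ [10,∞)`, and over each `t` it is the
circle of radius `r(t) = √(t(t-2)(t-10))` in the `(x,y)`-plane. Each piece is therefore the image of a
connected set `T × [-π,π]` under the continuous map `(t,θ) ↦ (t, r(t) cos θ, r(t) sin θ)`; for
`T = [0,2]` this domain is compact, and for `T = [10,∞)` the `t`-coordinate is unbounded. -/

open Real Set

noncomputable def revolve (f : ℝ → ℝ) (p : ℝ × ℝ) : ℝ × ℝ × ℝ :=
  (p.1, √(f p.1) * cos p.2, √(f p.1) * sin p.2)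

lemma continuous_revolve {f : ℝ → ℝ} (hf : Continuous f) : Continuous (revolve f) := by
  unfold revolve; fun_prop

lemma fst_image_revolve (f : ℝ → ℝ) (T : Set ℝ) {S : Set ℝ} (hS : S.Nonempty) :
    Prod.fst '' (revolve f '' (T ×ˢ S)) = T := by
  rw [image_image]
  exact fst_image_prod T hS

lemma exists_polar (x y : ℝ) :
    ∃ θ ∈ Icc (-π) π, x = √(x ^ 2 + y ^ 2) * cos θ ∧ y = √(x ^ 2 + y ^ 2) * sin θ := by
  have hnorm : ‖(⟨x, y⟩ : ℂ)‖ = √(x ^ 2 + y ^ 2) := by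
    rw [Complex.norm_def, Complex.normSq_mk]; ring_nf
  exact ⟨_, Ioc_subset_Icc_self (Complex.arg_mem_Ioc _),
    by rw [← hnorm, Complex.norm_mul_cos_arg], by rw [← hnorm, Complex.norm_mul_sin_arg]⟩

lemma image_revolve {f : ℝ → ℝ} {T : Set ℝ} (hf : ∀ t ∈ T, 0 ≤ f t) :
    revolve f '' (T ×ˢ Icc (-π) π) = {p | f p.1 = p.2.1 ^ 2 + p.2.2 ^ 2 ∧ p.1 ∈ T} := by
  ext ⟨t, x, y⟩
  constructor
  · rintro ⟨⟨t, θ⟩, ⟨ht, -⟩, hp⟩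
    simp only [revolve, Prod.mk.injEq] at hp
    obtain ⟨rfl, rfl, rfl⟩ := hp
    refine ⟨?_, ht⟩
    have hsq := sq_sqrt (hf t ht)
    linear_combination (-(cos θ ^ 2 + sin θ ^ 2)) * hsq - f t * sin_sq_add_cos_sq θ
  · rintro ⟨heq, ht⟩
    obtain ⟨θ, hθ, hx, hy⟩ := exists_polar x y
    rw [← heq] at hx hy
    exact ⟨(t, θ), ⟨ht, hθ⟩, by rw [hx, hy]; rfl⟩

lemma cubic_nonneg_iff (t : ℝ) : 0 ≤ t * (t - 2) * (t - 10) ↔ t ∈ Icc 0 2 ∨ t ∈ Ici 10 := by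
  rw [mem_Icc, mem_Ici]
  constructor
  · intro h
    rcases le_or_gt 10 t with h10 | h10
    · exact .inr h10
    refine .inl ⟨?_, ?_⟩
    · by_contra! h0
      nlinarith [mul_pos (mul_pos (neg_pos.2 h0) (by linarith : (0 : ℝ) < 2 - t)) (sub_pos.2 h10)]
    · by_contra! h2
      nlinarith [mul_pos (mul_pos (by linarith : (0 : ℝ) < t) (sub_pos.2 h2)) (sub_pos.2 h10)]
  · rintro (⟨h0, h2⟩ | h10)
    · exact mul_nonneg_of_nonpos_of_nonpos
        (mul_nonpos_of_nonneg_of_nonpos h0 (by linarith)) (by linarith)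
    · exact mul_nonneg (mul_nonneg (by linarith) (by linarith)) (by linarith)

theorem real_points_two_components
    (X : Set (ℝ × ℝ × ℝ))
    (hX : X = {p : ℝ × ℝ × ℝ |
      p.1 * (p.1 - 2) * (p.1 - 10) = p.2.1 ^ 2 + p.2.2 ^ 2})
    (X₁ : Set (ℝ × ℝ × ℝ))
    (hX₁ : X₁ = {p : ℝ × ℝ × ℝ |
      p.1 * (p.1 - 2) * (p.1 - 10) = p.2.1 ^ 2 + p.2.2 ^ 2 ∧ 0 ≤ p.1 ∧ p.1 ≤ 2})
    (X₂ : Set (ℝ × ℝ × ℝ))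
    (hX₂ : X₂ = {p : ℝ × ℝ × ℝ |
      p.1 * (p.1 - 2) * (p.1 - 10) = p.2.1 ^ 2 + p.2.2 ^ 2 ∧ 10 ≤ p.1}) :
    (X = X₁ ∪ X₂ ∧ X₁ ∩ X₂ = ∅) ∧
    (IsConnected X₁ ∧ IsConnected X₂) ∧
    IsCompact X₁ ∧
    ¬ Bornology.IsBounded X₂ := by
  subst hX hX₁ hX₂
  set f : ℝ → ℝ := fun t ↦ t * (t - 2) * (t - 10)
  have hpi : -π ≤ π := by linarith [pi_pos]
  have hf : Continuous f := by fun_prop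
  have hX₁ : {p : ℝ × ℝ × ℝ | f p.1 = p.2.1 ^ 2 + p.2.2 ^ 2 ∧ 0 ≤ p.1 ∧ p.1 ≤ 2} =
      revolve f '' (Icc 0 2 ×ˢ Icc (-π) π) :=
    (image_revolve fun t ht ↦ (cubic_nonneg_iff t).2 (.inl ht)).symm
  have hX₂ : {p : ℝ × ℝ × ℝ | f p.1 = p.2.1 ^ 2 + p.2.2 ^ 2 ∧ 10 ≤ p.1} =
      revolve f '' (Ici 10 ×ˢ Icc (-π) π) :=
    (image_revolve fun t ht ↦ (cubic_nonneg_iff t).2 (.inr ht)).symm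
  refine ⟨⟨?_, ?_⟩, ⟨?_, ?_⟩, ?_, ?_⟩
  · ext p
    simp only [mem_ofPred_eq, mem_union, ← and_or_left]
    refine ⟨fun h ↦ ⟨h, (cubic_nonneg_iff p.1).1 (h ▸ by positivity)⟩, And.left⟩
  · ext p
    simp only [mem_inter_iff, mem_ofPred_eq, mem_empty_iff_false, iff_false]
    rintro ⟨⟨-, -, h2⟩, -, h10⟩
    linarith
  · rw [hX₁]
    exact ((isConnected_Icc zero_le_two).prod (isConnected_Icc hpi)).image _
      (continuous_revolve hf).continuousOn
  · rw [hX₂]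
    exact (isConnected_Ici.prod (isConnected_Icc hpi)).image _
      (continuous_revolve hf).continuousOn
  · rw [hX₁]
    exact (isCompact_Icc.prod isCompact_Icc).image (continuous_revolve hf)
  · rw [hX₂]
    intro hb
    have hfst := hb.image_fst
    rw [fst_image_revolve f _ (nonempty_Icc.2 hpi)] at hfst
    exact not_bddAbove_Ici (10 : ℝ) hfst.bddAbove
end

section
/- Let p be a prime with p ≠ 2 and p ≠ 5, and let t, x, y ∈ ℤ_p satisfy t(t-2)(t-10) = x² + y². Then: (i) if t ≠ 0, there exist a, b ∈ ℚ_p with t = a² + b²; and (ii) if t ≠ 2, there exist a, b ∈ ℚ_p with t - 2 = a² + b². (Equivalently, the quaternion Hilbert symbols (t,-1)_p and (t-2,-1)_p are trivial for every p-adic integral point of the variety with tP(t) ≠ 0.) -/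
/-!
For `p` odd, Hensel's lemma lifts a representation of a residue as a sum of two squares, so every
`p`-adic unit is a sum of two squares. If `s (s - c) (s - d) = x² + y²` with `c, d` units, then
either `s` is a unit, or `(s - c)(s - d)` is a unit and `s = (x² + y²) / ((s - c)(s - d))` is a
quotient of two sums of two squares, hence again one. Away from `2` and `5` this applies to
`s = t` with `(c, d) = (2, 10)` and to `s = t - 2` with `(c, d) = (-2, 8)`.
-/

theorem exists_sq_add_sq_of_mul_eq {K : Type*} [Field K] {s r x y a b : K}
    (hr : r = a ^ 2 + b ^ 2) (hr0 : r ≠ 0) (h : s * r = x ^ 2 + y ^ 2) :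
    ∃ c d : K, s = c ^ 2 + d ^ 2 :=
  -- `s = (x² + y²)(a² + b²) / r²`, expanded by the Brahmagupta–Fibonacci identity
  ⟨(x * a + y * b) / r, (y * a - x * b) / r, by
    field_simp
    linear_combination r * h + (x ^ 2 + y ^ 2) * hr⟩

theorem IsLocalRing.isUnit_sub_of_not_isUnit {R : Type*} [CommRing R] [IsLocalRing R] {a c : R}
    (ha : ¬IsUnit a) (hc : IsUnit c) : IsUnit (a - c) := by
  have := isUnit_or_isUnit_of_isUnit_add (a := c - a) (b := a) (by rwa [sub_add_cancel])
  simpa using (this.resolve_right ha).neg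

namespace PadicInt

variable {p : ℕ} [hp : Fact p.Prime]

theorem isUnit_iff_toZMod_ne_zero {z : ℤ_[p]} : IsUnit z ↔ toZMod z ≠ 0 := by
  rw [Ne, ← RingHom.mem_ker, ker_toZMod, IsLocalRing.mem_maximalIdeal, mem_nonunits_iff, not_not]

theorem isUnit_natCast_of_prime_ne {q : ℕ} (hq : q.Prime) (hpq : p ≠ q) :
    IsUnit (q : ℤ_[p]) :=
  isUnit_iff.mpr <| norm_natCast_eq_one_iff.mpr <| (Nat.coprime_primes hp.out hq).mpr hpq

theorem isUnit_two (hp2 : p ≠ 2) : IsUnit (2 : ℤ_[p]) := by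
  simpa using isUnit_natCast_of_prime_ne Nat.prime_two hp2

theorem exists_sq_eq_of_toZMod_eq_sq (hp2 : p ≠ 2) {u : ℤ_[p]} {a : ZMod p} (ha : a ≠ 0)
    (hu : toZMod u = a ^ 2) : ∃ r : ℤ_[p], u = r ^ 2 := by
  obtain ⟨A, rfl⟩ := ZMod.ringHom_surjective toZMod a
  have hA : IsUnit A := isUnit_iff_toZMod_ne_zero.mpr ha
  let F : Polynomial ℤ_[p] := .X ^ 2 - .C u
  have hnorm : ‖F.aeval A‖ < ‖F.derivative.aeval A‖ ^ 2 := by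
    have hF : ¬IsUnit (A ^ 2 - u) := by
      rw [isUnit_iff_toZMod_ne_zero, map_sub, map_pow, hu, sub_self, not_not]
    have hF' : F.derivative.aeval A = 2 * A := by simp [F, one_add_one_eq_two]
    rw [hF', isUnit_iff.mp ((isUnit_two hp2).mul hA), one_pow]
    simpa [F] using not_isUnit_iff.mp hF
  obtain ⟨r, hr, -⟩ := hensels_lemma hnorm
  exact ⟨r, by simpa [F, sub_eq_zero, eq_comm] using hr⟩

theorem exists_sq_add_sq_of_isUnit (hp2 : p ≠ 2) {u : ℤ_[p]} (hu : IsUnit u) :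
    ∃ a b : ℤ_[p], u = a ^ 2 + b ^ 2 := by
  obtain ⟨a, b, hab⟩ := ZMod.sq_add_sq p (toZMod u)
  wlog ha : a ≠ 0 generalizing a b
  · refine this b a (by rw [← hab, add_comm]) fun hb ↦ ?_
    exact isUnit_iff_toZMod_ne_zero.mp hu (by simp_all)
  obtain ⟨B, rfl⟩ := ZMod.ringHom_surjective toZMod b
  obtain ⟨r, hr⟩ := exists_sq_eq_of_toZMod_eq_sq hp2 ha (u := u - B ^ 2)
    (by rw [map_sub, map_pow, ← hab, add_sub_cancel_right])
  exact ⟨r, B, by rw [← hr, sub_add_cancel]⟩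

theorem exists_sq_add_sq_of_mul_sub_mul_sub_eq (hp2 : p ≠ 2) {s c d x y : ℤ_[p]}
    (hc : IsUnit c) (hd : IsUnit d) (h : s * (s - c) * (s - d) = x ^ 2 + y ^ 2) :
    ∃ a b : ℚ_[p], (s : ℚ_[p]) = a ^ 2 + b ^ 2 := by
  by_cases hs : IsUnit s
  · obtain ⟨a, b, rfl⟩ := exists_sq_add_sq_of_isUnit hp2 hs
    exact ⟨a, b, by push_cast; rfl⟩
  have hr : IsUnit ((s - c) * (s - d)) :=
    (IsLocalRing.isUnit_sub_of_not_isUnit hs hc).mul (IsLocalRing.isUnit_sub_of_not_isUnit hs hd)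
  obtain ⟨a, b, hab⟩ := exists_sq_add_sq_of_isUnit hp2 hr
  exact exists_sq_add_sq_of_mul_eq (x := x) (y := y) (congrArg ((↑) : ℤ_[p] → ℚ_[p]) hab)
    (coe_ne_zero.mpr hr.ne_zero)
    (congrArg ((↑) : ℤ_[p] → ℚ_[p]) ((mul_assoc s _ _).symm.trans h))

end PadicInt

theorem hilbert_symbol_trivial_at_good_primes
    (p : ℕ) [Fact p.Prime] (hp2 : p ≠ 2) (hp5 : p ≠ 5)
    (t x y : ℤ_[p]) (h : t * (t - 2) * (t - 10) = x ^ 2 + y ^ 2) :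
    (t ≠ 0 → ∃ a b : ℚ_[p], (t : ℚ_[p]) = a ^ 2 + b ^ 2) ∧
    (t ≠ 2 → ∃ a b : ℚ_[p], (t : ℚ_[p]) - 2 = a ^ 2 + b ^ 2) := by
  have h2 : IsUnit (2 : ℤ_[p]) := PadicInt.isUnit_two hp2
  have h5 : IsUnit (5 : ℤ_[p]) := by
    simpa using PadicInt.isUnit_natCast_of_prime_ne Nat.prime_five hp5
  have h10 : IsUnit (10 : ℤ_[p]) := by convert h2.mul h5 using 1; norm_num
  have h8 : IsUnit (8 : ℤ_[p]) := by convert h2.pow 3 using 1; norm_num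
  refine ⟨fun _ ↦ PadicInt.exists_sq_add_sq_of_mul_sub_mul_sub_eq hp2 h2 h10 h, fun _ ↦ ?_⟩
  obtain ⟨a, b, hab⟩ := PadicInt.exists_sq_add_sq_of_mul_sub_mul_sub_eq hp2 (s := t - 2)
    (c := -2) (d := 8) (x := x) (y := y) h2.neg h8 (by linear_combination h)
  exact ⟨a, b, by exact_mod_cast hab⟩
end

section
/- Let t, x, y ∈ ℤ satisfy t(t-2)(t-10) = x² + y² and t ≡ 1 (mod 8). Then t = 1. In particular, every integral point of the variety t(t-2)(t-10) = x² + y² whose t-coordinate is ≡ 1 (mod 8) lies on the bounded real component {0 ≤ t ≤ 2}. -/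
/-! The cubic t(t - 2)(t - 10) is nonnegative only for 0 ≤ t ≤ 2 or t ≥ 10, and in the first
range t ≡ 1 (mod 8) forces t = 1. For t ≥ 10 the middle factor t - 2 is odd, so it is coprime to
t and to t - 10 (common divisors divide 2, resp. 8). A sum of two squares with a factor coprime to
the rest makes that factor a sum of two squares too (the primes ≡ 3 (mod 4) keep their
multiplicities), but t - 2 ≡ 3 (mod 4) is not one. -/

theorem Nat.eq_sq_add_sq_of_coprime_of_mul {m k : ℕ} (hmk : m.Coprime k) (hk : k ≠ 0)
    (h : ∃ x y, m * k = x ^ 2 + y ^ 2) : ∃ x y, m = x ^ 2 + y ^ 2 := by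
  rw [Nat.eq_sq_add_sq_iff] at h ⊢
  intro q hq hq4
  obtain ⟨hq', hqm, hm⟩ := Nat.mem_primeFactors.1 hq
  have : Fact q.Prime := ⟨hq'⟩
  have hqk : ¬ q ∣ k := fun hqk => hq'.one_lt.ne' (Nat.eq_one_of_dvd_coprimes hmk hqm hqk)
  have hmul := h q (by rw [Nat.primeFactors_mul hm hk]; exact Finset.mem_union_left _ hq) hq4
  rwa [padicValNat.mul hm hk, padicValNat.eq_zero_of_not_dvd hqk, add_zero] at hmul

theorem Nat.not_exists_sq_add_sq_of_mod_four_eq_three {n : ℕ} (hn : n % 4 = 3) :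
    ¬ ∃ x y, n = x ^ 2 + y ^ 2 := by
  rintro ⟨x, y, rfl⟩
  have hcast : ((x ^ 2 + y ^ 2 : ℕ) : ZMod 4) = 3 := by
    simpa using (ZMod.natCast_eq_natCast_iff' (x ^ 2 + y ^ 2) 3 4).mpr hn
  push_cast at hcast
  exact (by decide : ∀ a b : ZMod 4, a ^ 2 + b ^ 2 ≠ 3) x y hcast

theorem le_and_le_or_le_of_mul_sub_nonneg {R : Type*} [Ring R] [LinearOrder R]
    [IsStrictOrderedRing R] {a b c t : R} (hab : a ≤ b)
    (h : 0 ≤ (t - a) * (t - b) * (t - c)) : (a ≤ t ∧ t ≤ b) ∨ c ≤ t := by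
  by_contra! hneg
  have hpos : 0 < (t - a) * (t - b) := by
    rcases lt_or_ge t a with hta | hta
    · exact mul_pos_of_neg_of_neg (sub_neg.2 hta) (sub_neg.2 (hta.trans_le hab))
    · exact mul_pos (sub_pos.2 (hab.trans_lt (hneg.1 hta))) (sub_pos.2 (hneg.1 hta))
  exact h.not_gt (mul_neg_of_pos_of_neg hpos (sub_neg.2 hneg.2))

theorem not_exists_sq_add_sq_of_mod_eight_eq_seven {c : ℕ} (hc : c % 8 = 7) :
    ¬ ∃ x y, (c + 10) * (c + 8) * c = x ^ 2 + y ^ 2 := by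
  have hodd : Odd c := Nat.odd_iff.mpr (by omega)
  have h10 : Nat.Coprime (c + 8) (c + 10) := by
    rw [show c + 10 = 2 + (c + 8) by ring, Nat.coprime_add_self_right, Nat.coprime_two_right]
    exact hodd.add_even (by decide)
  have h0 : Nat.Coprime (c + 8) c := by
    rw [Nat.coprime_self_add_left, show 8 = 2 ^ 3 by rfl]
    exact (Nat.coprime_two_left.mpr hodd).pow_left 3
  rw [show (c + 10) * (c + 8) * c = (c + 8) * ((c + 10) * c) by ring]
  intro h
  exact Nat.not_exists_sq_add_sq_of_mod_four_eq_three (by omega)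
    (Nat.eq_sq_add_sq_of_coprime_of_mul (h10.mul_right h0) (mul_ne_zero (by omega) (by omega)) h)

theorem integral_point_one_mod_eight_on_bounded_component
    (t x y : ℤ) (h : t * (t - 2) * (t - 10) = x ^ 2 + y ^ 2)
    (ht : t ≡ 1 [ZMOD 8]) : t = 1 := by
  have hnonneg : 0 ≤ (t - 0) * (t - 2) * (t - 10) := by rw [sub_zero, h]; positivity
  rw [Int.ModEq] at ht
  rcases le_and_le_or_le_of_mul_sub_nonneg (by norm_num) hnonneg with ⟨h0, h2⟩ | h10
  · omega
  · obtain ⟨c, rfl⟩ : ∃ c : ℕ, t = c + 10 := ⟨(t - 10).toNat, by omega⟩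
    refine (not_exists_sq_add_sq_of_mod_eight_eq_seven (c := c) (by omega)
      ⟨x.natAbs, y.natAbs, ?_⟩).elim
    zify
    rw [sq_abs, sq_abs, ← h]
    ring
end

section
/- There do not exist integers t, x, y with t(t-2)(t-10) = x² + y², t ≡ 1 (mod 8), and t ≡ 5 (mod 25). (This is the integral-points content of the paper's counterexample showing that strong approximation with Brauer–Manin obstruction off ∞ fails for the variety t(t-2)(t-10) = x² + y²: the variety has an adelic point orthogonal to the Brauer group with |t-1|₂ ≤ 1/8 and |t-5|₅ ≤ 1/25, but no integral point satisfying these congruences.) -/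
/-!
The congruences force `t ≡ 105 (mod 200)`, so `t - 2 ≡ 3 (mod 4)` and `t (t - 10) > 0`. Since `t - 2`
is odd and differs from `t` and `t - 10` by `2` and `8`, it is coprime to `t (t - 10)`. Some prime
`q ≡ 3 (mod 4)` divides `t - 2` to an odd power, hence divides the product to the same odd power,
which is impossible for a sum of two squares.
-/

theorem Nat.sq_add_sq_mod_four_ne_three (x y : ℕ) : (x ^ 2 + y ^ 2) % 4 ≠ 3 := by
  have key : ∀ a b : ZMod 4, a ^ 2 + b ^ 2 ≠ 3 := by decide
  intro h
  apply key x y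
  exact_mod_cast (ZMod.natCast_eq_natCast_iff' _ 3 4).mpr h

theorem Nat.exists_mem_primeFactors_mod_four_eq_three_odd_padicValNat {n : ℕ} (hn : n % 4 = 3) :
    ∃ q ∈ n.primeFactors, q % 4 = 3 ∧ Odd (padicValNat q n) := by
  by_contra! h
  obtain ⟨x, y, rfl⟩ := Nat.eq_sq_add_sq_iff.mpr fun q hq hq4 ↦ Nat.not_odd_iff_even.mp (h q hq hq4)
  exact Nat.sq_add_sq_mod_four_ne_three x y hn

theorem Nat.mul_ne_sq_add_sq_of_mod_four_eq_three {m k : ℕ} (hm : m % 4 = 3) (hk : k ≠ 0)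
    (hmk : m.Coprime k) (x y : ℕ) : m * k ≠ x ^ 2 + y ^ 2 := by
  intro h
  obtain ⟨q, hq, hq4, hodd⟩ := Nat.exists_mem_primeFactors_mod_four_eq_three_odd_padicValNat hm
  have hqp := Nat.prime_of_mem_primeFactors hq
  have := Fact.mk hqp
  have hqk : ¬ q ∣ k := fun hd ↦
    hqp.one_lt.ne' (Nat.eq_one_of_dvd_coprimes hmk (Nat.dvd_of_mem_primeFactors hq) hd)
  have hm0 : m ≠ 0 := by omega
  have hmk0 : m * k ≠ 0 := mul_ne_zero hm0 hk
  have heven := Nat.eq_sq_add_sq_iff.mp ⟨x, y, h⟩ q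
    (Nat.mem_primeFactors.mpr ⟨hqp, dvd_mul_of_dvd_left (Nat.dvd_of_mem_primeFactors hq) k, hmk0⟩) hq4
  rw [padicValNat.mul hm0 hk, padicValNat.eq_zero_of_not_dvd hqk, add_zero] at heven
  exact Nat.not_even_iff_odd.mpr hodd heven

theorem Int.mul_ne_sq_add_sq_of_emod_four_eq_three {m k : ℤ} (hm : m % 4 = 3) (hk : 0 < k)
    (hmk : IsCoprime m k) (x y : ℤ) : m * k ≠ x ^ 2 + y ^ 2 := by
  intro h
  have hm0 : 0 ≤ m := nonneg_of_mul_nonneg_left (h ▸ by positivity) hk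
  lift m to ℕ using hm0
  lift k to ℕ using hk.le
  rw [Int.isCoprime_iff_nat_coprime, Int.natAbs_natCast, Int.natAbs_natCast] at hmk
  refine Nat.mul_ne_sq_add_sq_of_mod_four_eq_three (by omega) (by omega) hmk x.natAbs y.natAbs ?_
  zify
  rwa [sq_abs, sq_abs]

theorem Int.isCoprime_sub_two_mul_sub_ten {t : ℤ} (ht : Odd t) :
    IsCoprime (t - 2) (t * (t - 10)) := by
  have h2 : IsCoprime (t - 2) 2 := Int.isCoprime_two_right.mpr (ht.sub_even even_two)
  have ht2 : 2 + (t - 2) * 1 = t := by ring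
  have ht10 : -2 ^ 3 + (t - 2) * 1 = t - 10 := by ring
  exact (ht2 ▸ h2.add_mul_left_right 1).mul_right
    (ht10 ▸ (h2.pow_right (n := 3)).neg_right.add_mul_left_right 1)

theorem no_integral_point_with_congruences :
    ¬ ∃ t x y : ℤ, t * (t - 2) * (t - 10) = x ^ 2 + y ^ 2 ∧
      t ≡ 1 [ZMOD 8] ∧ t ≡ 5 [ZMOD 25] := by
  rintro ⟨t, x, y, h, h8, h25⟩
  rw [Int.ModEq] at h8 h25
  have hodd : Odd t := Int.odd_iff.mpr (by omega)
  have hpos : 0 < t * (t - 10) := by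
    rcases (by omega : 105 ≤ t ∨ t ≤ -95) with ht | ht <;> nlinarith
  exact Int.mul_ne_sq_add_sq_of_emod_four_eq_three (by omega) hpos
    (Int.isCoprime_sub_two_mul_sub_ten hodd) x y (by rw [← h]; ring)
end
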